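/- arXiv:0711.0982 — 4 statements merged into one kernel-verified Lean document; each statement's English description precedes it below -/
import Mathlib

section
/- Let α ∈ (0,1], θ > 0 and a > 0 be real numbers, and let k be an integer with k ≥ 1/θ. Then the infimum of ∑_{i=1}^k x_i^α over all tuples (x_1,…,x_k) with x_i ∈ [0, θa] for all i and ∑_{i=1}^k x_i = a equals ⌊1/θ⌋·(θa)^α + (a − ⌊1/θ⌋·θa)^α, and this infimum is attained by a point of the constraint set. -/
open Real Set Finset

lemma myRpowAddLe {p x y : ℝ} (hx : 0 ≤ x) (hy : 0 ≤ y) (hp : 0 ≤ p) (hp1 : p ≤ 1) :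
    (x + y) ^ p ≤ x ^ p + y ^ p := by
  lift x to NNReal using hx
  lift y to NNReal using hy
  exact_mod_cast NNReal.rpow_add_le_add_rpow x y hp hp1

lemma myIncrAnti {p d v u : ℝ} (hp : 0 < p) (hp1 : p ≤ 1) (hd : 0 ≤ d)
    (hv : 0 ≤ v) (hvu : v ≤ u) : (u + d) ^ p - u ^ p ≤ (v + d) ^ p - v ^ p := by
  have hcont : ContinuousOn (fun x : ℝ => (x + d) ^ p - x ^ p) (Set.Ici 0) :=
    (((Real.continuous_rpow_const hp.le).comp (continuous_id.add continuous_const)).sub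
      (Real.continuous_rpow_const hp.le)).continuousOn
  have hanti : AntitoneOn (fun x : ℝ => (x + d) ^ p - x ^ p) (Set.Ici 0) := by
    have hder : ∀ x ∈ Set.Ioi (0:ℝ), HasDerivAt (fun x : ℝ => (x + d) ^ p - x ^ p)
        (p * (x + d) ^ (p - 1) * 1 - p * x ^ (p - 1)) x := by
      intro x hx
      have hx0 : (0:ℝ) < x := hx
      have h1 : HasDerivAt (fun x : ℝ => (x + d) ^ p) (p * (x + d) ^ (p - 1) * 1) x :=
        (Real.hasDerivAt_rpow_const (Or.inl (by positivity))).comp x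
          ((hasDerivAt_id x).add_const d)
      have h2 : HasDerivAt (fun x : ℝ => x ^ p) (p * x ^ (p - 1)) x :=
        Real.hasDerivAt_rpow_const (Or.inl hx0.ne')
      exact h1.sub h2
    apply antitoneOn_of_deriv_nonpos (convex_Ici 0) hcont
    · intro x hx
      rw [interior_Ici] at hx
      exact (hder x hx).differentiableAt.differentiableWithinAt
    · intro x hx
      rw [interior_Ici] at hx
      have hx0 : (0:ℝ) < x := hx
      rw [(hder x hx).deriv]
      have : (x + d) ^ (p - 1) ≤ x ^ (p - 1) :=
        Real.rpow_le_rpow_of_nonpos hx0 (by linarith) (by linarith)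
      nlinarith
  have := hanti (Set.mem_Ici.2 hv) (Set.mem_Ici.2 (hv.trans hvu)) hvu
  simpa using this

/-- The vertex-value function. -/
noncomputable def myG (c p s : ℝ) : ℝ := (⌊s / c⌋ : ℝ) * c ^ p + (s - ⌊s / c⌋ * c) ^ p

lemma myG_step {c p : ℝ} (hc : 0 < c) (hp : 0 < p) (hp1 : p ≤ 1) {s t : ℝ}
    (hs : 0 ≤ s) (ht : 0 ≤ t) (htc : t ≤ c) : myG c p (s + t) ≤ myG c p s + t ^ p := by
  set n : ℤ := ⌊s / c⌋ with hn
  have hnc : (n : ℝ) * c ≤ s := by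
    have := Int.floor_le (s / c)
    rw [← hn] at this
    calc (n:ℝ) * c ≤ (s / c) * c := by nlinarith
    _ = s := by field_simp
  have hnc' : s < ((n : ℝ) + 1) * c := by
    have := Int.lt_floor_add_one (s / c)
    rw [← hn] at this
    calc s = (s / c) * c := by field_simp
    _ < ((n:ℝ) + 1) * c := by push_cast; nlinarith
  set u : ℝ := s - n * c with hu
  have hu0 : 0 ≤ u := by simp [hu]; linarith
  have huc : u < c := by simp [hu]; nlinarith [hnc']
  by_cases hcase : u + t < c
  · have hfl : ⌊(s + t) / c⌋ = n := by
      rw [Int.floor_eq_iff]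
      constructor
      · rw [le_div_iff₀ hc]; linarith
      · rw [div_lt_iff₀ hc]; push_cast; nlinarith
    have hsub : (u + t) ^ p ≤ u ^ p + t ^ p := myRpowAddLe hu0 ht hp.le hp1
    unfold myG
    rw [hfl, ← hn]
    have : s + t - (n:ℝ) * c = u + t := by simp [hu]; ring
    rw [this]
    linarith
  · push_neg at hcase
    have hfl : ⌊(s + t) / c⌋ = n + 1 := by
      rw [Int.floor_eq_iff]
      constructor
      · rw [le_div_iff₀ hc]; push_cast; linarith
      · rw [div_lt_iff₀ hc]; push_cast; nlinarith
    set v : ℝ := u + t - c with hv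
    have hv0 : 0 ≤ v := by simp [hv]; linarith
    have hvu : v ≤ u := by simp [hv]; linarith
    have hkey := myIncrAnti hp hp1 (d := c - u) (by linarith) hv0 hvu
    have e1 : u + (c - u) = c := by ring
    have e2 : v + (c - u) = t := by simp only [hv]; ring
    rw [e1, e2] at hkey
    unfold myG
    rw [hfl, ← hn]
    have : s + t - ((n:ℝ) + 1) * c = v := by simp [hv, hu]; ring
    push_cast
    rw [this]
    nlinarith
lemma myG_zero {c p : ℝ} (hc : 0 < c) (hp : 0 < p) : myG c p 0 = 0 := by
  unfold myG
  rw [zero_div, Int.floor_zero]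
  simp [Real.zero_rpow hp.ne']

lemma myG_le_sum {c p : ℝ} (hc : 0 < c) (hp : 0 < p) (hp1 : p ≤ 1) {ι : Type*}
    (s : Finset ι) (x : ι → ℝ) (hx : ∀ i ∈ s, x i ∈ Set.Icc 0 c) :
    myG c p (∑ i ∈ s, x i) ≤ ∑ i ∈ s, (x i) ^ p := by
  induction s using Finset.cons_induction with
  | empty => simp [myG_zero hc hp]
  | cons a s ha ih =>
    rw [Finset.sum_cons, Finset.sum_cons]
    have hsum0 : 0 ≤ ∑ i ∈ s, x i :=
      Finset.sum_nonneg fun i hi => (hx i (Finset.mem_cons_of_mem hi)).1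
    have hxa := hx a (Finset.mem_cons_self a s)
    have step := myG_step hc hp hp1 hsum0 hxa.1 hxa.2
    have ih' := ih fun i hi => hx i (Finset.mem_cons_of_mem hi)
    calc myG c p (x a + ∑ i ∈ s, x i) = myG c p ((∑ i ∈ s, x i) + x a) := by ring_nf
    _ ≤ myG c p (∑ i ∈ s, x i) + (x a) ^ p := step
    _ ≤ ∑ i ∈ s, (x i) ^ p + (x a) ^ p := by linarith
    _ = (x a) ^ p + ∑ i ∈ s, (x i) ^ p := by ring

lemma mySumHelper (k m : ℕ) (hmk : m ≤ k) (C R : ℝ) :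
    (∑ j ∈ Finset.range k, (if j < m then C else if j = m then R else 0))
      = m * C + (if m < k then R else 0) := by
  have split : ∀ j : ℕ, (if j < m then C else if j = m then R else 0)
      = (if j < m then C else 0) + (if j = m then R else 0) := by
    intro j
    rcases lt_trichotomy j m with h | h | h
    · simp [h, Nat.ne_of_lt h]
    · simp [h]
    · simp [Nat.lt_asymm h, Nat.ne_of_gt h]
  rw [Finset.sum_congr rfl fun j _ => split j, Finset.sum_add_distrib]
  congr 1
  · simp only [← Finset.mem_range]
    rw [Finset.sum_ite_mem, Finset.inter_eq_right.mpr (Finset.range_subset_range.mpr hmk)]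
    simp [Finset.sum_const, nsmul_eq_mul]
  · rw [Finset.sum_ite_eq' (Finset.range k) m fun _ => R]
    simp [Finset.mem_range]

/-- **Box-constrained concave minimization identity (3.33).** For `0 < α ≤ 1`, `θ > 0`, `a > 0`
and an integer `k ≥ 1/θ`, the infimum of `∑ i, (x i) ^ α` over tuples with `x i ∈ [0, θ·a]` and
`∑ i, x i = a` is attained and equals `⌊1/θ⌋ * (θ·a) ^ α + (a - ⌊1/θ⌋ * θ * a) ^ α`. -/
theorem inf_sum_rpow_box_eq (α θ a : ℝ) (hα : α ∈ Set.Ioc (0 : ℝ) 1) (hθ : 0 < θ) (ha : 0 < a)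
    (k : ℕ) (hk : 1 / θ ≤ (k : ℝ)) :
    IsLeast
      {s : ℝ | ∃ x : Fin k → ℝ, (∀ i, x i ∈ Set.Icc 0 (θ * a)) ∧ (∑ i, x i) = a ∧
        s = ∑ i, (x i) ^ α}
      ((⌊1 / θ⌋ : ℝ) * (θ * a) ^ α + (a - (⌊1 / θ⌋ : ℝ) * θ * a) ^ α) ∧
    sInf
      {s : ℝ | ∃ x : Fin k → ℝ, (∀ i, x i ∈ Set.Icc 0 (θ * a)) ∧ (∑ i, x i) = a ∧
        s = ∑ i, (x i) ^ α}
      = (⌊1 / θ⌋ : ℝ) * (θ * a) ^ α + (a - (⌊1 / θ⌋ : ℝ) * θ * a) ^ α := by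
  obtain ⟨hα0, hα1⟩ := hα
  set c : ℝ := θ * a with hc
  have hc0 : 0 < c := by positivity
  have hθa : a / c = 1 / θ := by rw [hc]; field_simp
  have hfl0 : (0:ℤ) ≤ ⌊1/θ⌋ := Int.floor_nonneg.2 (by positivity)
  set m : ℕ := (⌊1/θ⌋).toNat with hmdef
  have hmcast : (m:ℝ) = ((⌊(1:ℝ)/θ⌋ : ℤ) : ℝ) := by
    rw [hmdef]; exact_mod_cast Int.toNat_of_nonneg hfl0
  have hm_le : (m:ℝ) ≤ 1/θ := by rw [hmcast]; exact Int.floor_le _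
  have hm_gt : 1/θ < (m:ℝ) + 1 := by rw [hmcast]; exact Int.lt_floor_add_one _
  have hmk : m ≤ k := by exact_mod_cast le_trans hm_le hk
  set r : ℝ := a - m * c with hr
  have hmθ1 : (m:ℝ) * θ ≤ 1 := by
    have := mul_le_mul_of_nonneg_right hm_le hθ.le
    rwa [one_div, inv_mul_cancel₀ hθ.ne'] at this
  have hmθ2 : 1 < ((m:ℝ) + 1) * θ := by
    have := mul_lt_mul_of_pos_right hm_gt hθ
    rwa [one_div, inv_mul_cancel₀ hθ.ne'] at this
  have hr0 : 0 ≤ r := by rw [hr, hc]; nlinarith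
  have hrc : r ≤ c := by rw [hr, hc]; nlinarith
  have hre : r = a - ((⌊(1:ℝ)/θ⌋ : ℤ) : ℝ) * θ * a := by rw [hr, ← hmcast, hc]; ring
  have hT : ((⌊(1:ℝ)/θ⌋ : ℤ) : ℝ) * (θ*a)^α + (a - ((⌊(1:ℝ)/θ⌋ : ℤ) : ℝ)*θ*a)^α
      = m * c^α + r^α := by
    rw [← hmcast, hc, hr, show a - (m:ℝ)*θ*a = a - (m:ℝ)*(θ*a) by ring]
  have hifr : ∀ R : ℝ, (m = k → R = 0) → (if m < k then R else 0) = R := by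
    intro R h0
    by_cases h : m < k
    · simp [h]
    · have hmk' : m = k := le_antisymm hmk (not_lt.1 h)
      simp [h, h0 hmk']
  have hrk : m = k → r = 0 := by
    intro hmk'
    have h1 : (1:ℝ)/θ = k := le_antisymm hk (by rw [← hmk']; exact_mod_cast hm_le)
    have h2 : (k:ℝ) * θ = 1 := by rw [← h1]; field_simp
    rw [hr, hmk', hc]; nlinarith
  -- the minimizing point
  set x : Fin k → ℝ := fun i => if (i:ℕ) < m then c else if (i:ℕ) = m then r else 0 with hx
  have hxbound : ∀ i, x i ∈ Set.Icc 0 c := by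
    intro i
    rw [hx]
    dsimp only
    split_ifs
    · exact ⟨hc0.le, le_refl c⟩
    · exact ⟨hr0, hrc⟩
    · exact ⟨le_refl 0, hc0.le⟩
  have hxsum : (∑ i, x i) = a := by
    rw [hx, Fin.sum_univ_eq_sum_range (fun j => if j < m then c else if j = m then r else 0) k,
      mySumHelper k m hmk c r, hifr r hrk, hr]
    ring
  have hxval : (∑ i, (x i) ^ α) = m * c^α + r^α := by
    have hcongr : ∀ i : Fin k, (x i) ^ α
        = (fun j => if j < m then c^α else if j = m then r^α else 0) (i:ℕ) := by
      intro i
      rw [hx]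
      dsimp only
      split_ifs
      · rfl
      · rfl
      · exact Real.zero_rpow hα0.ne'
    rw [Finset.sum_congr rfl fun i _ => hcongr i,
      Fin.sum_univ_eq_sum_range (fun j => if j < m then c^α else if j = m then r^α else 0) k,
      mySumHelper k m hmk (c^α) (r^α), hifr (r^α)]
    intro hmk'
    rw [hrk hmk']
    exact Real.zero_rpow hα0.ne'
  have hmem : (m * c^α + r^α : ℝ) ∈
      {s : ℝ | ∃ x : Fin k → ℝ, (∀ i, x i ∈ Set.Icc 0 (θ * a)) ∧ (∑ i, x i) = a ∧
        s = ∑ i, (x i) ^ α} := ⟨x, fun i => by rw [← hc]; exact hxbound i, hxsum, hxval.symm⟩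
  have hlb : ∀ s ∈ {s : ℝ | ∃ x : Fin k → ℝ, (∀ i, x i ∈ Set.Icc 0 (θ * a)) ∧ (∑ i, x i) = a ∧
        s = ∑ i, (x i) ^ α}, (m * c^α + r^α : ℝ) ≤ s := by
    rintro s ⟨y, hy, hysum, rfl⟩
    have key := myG_le_sum hc0 hα0 hα1 Finset.univ y (fun i _ => by rw [hc]; exact hy i)
    rw [hysum] at key
    unfold myG at key
    rw [hθa, ← hmcast] at key
    rw [← hr] at key
    exact key
  have hleast : IsLeast {s : ℝ | ∃ x : Fin k → ℝ, (∀ i, x i ∈ Set.Icc 0 (θ * a)) ∧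
      (∑ i, x i) = a ∧ s = ∑ i, (x i) ^ α} (m * c^α + r^α) := ⟨hmem, hlb⟩
  rw [hT]
  exact ⟨hleast, hleast.csInf_eq⟩
end

section
/- Let (Ω, F, P) be a probability space, k ≥ 1 an integer, and W_1, …, W_k independent, identically distributed real-valued random variables. Let g > 0, let f : [g,∞) → ℝ be nondecreasing, and set β := 2·exp(−f(g)). Assume |W_1| ≥ g almost surely and P(|W_1| ≥ u) ≤ (2/β)·exp(−f(u)) for every u ≥ g. Then for every real r > k·g and every δ ∈ (0,1) with (1−δ)·r > k·g, one has P(∑_{i=1}^k |W_i| > r) ≤ (2/β)^k · (2 + (ln r − ln g)/ln(1+δ))^k · exp(−inf{∑_{i=1}^k f(x_i) : ∑_{i=1}^k x_i = (1−δ)·r, x_i ∈ [g, r] for all i}). -/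
/-!
Round each `|W i|` down to a point of the geometric grid `g, g(1+δ), g(1+δ)², …` truncated
at `r`; the grid has at most `2 + log(r/g)/log(1+δ)` points. Since each `|W i|` (capped at
`r`) is lost by a factor at most `1+δ`, on the event `∑ |W i| > r` the rounded vector `c`
has `∑ c i ≥ r/(1+δ) ≥ (1-δ) r`. By independence `P(∀ i, |W i| ≥ c i) ≤ (2/β)^k e^{-∑ f (c i)}`,
and lowering `c` inside `[g, r]^k` to a vector with sum exactly `(1-δ) r` only decreases
`∑ f (c i)`, so each term is bounded by the infimum. A union bound over the grid vectors
finishes the proof.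
-/

open MeasureTheory ProbabilityTheory Finset

lemma min_sum_le_sum_min {ι : Type*} (s : Finset ι) {t : ι → ℝ} (ht : ∀ i ∈ s, 0 ≤ t i)
    {r : ℝ} (hr : 0 ≤ r) : min (∑ i ∈ s, t i) r ≤ ∑ i ∈ s, min (t i) r := by
  by_cases h : ∃ i ∈ s, r ≤ t i
  · obtain ⟨i, hi, hri⟩ := h
    calc min (∑ i ∈ s, t i) r ≤ r := min_le_right _ _
      _ = min (t i) r := (min_eq_right hri).symm
      _ ≤ ∑ j ∈ s, min (t j) r := single_le_sum (fun j hj => le_min (ht j hj) hr) hi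
  · push Not at h
    rw [sum_congr rfl fun i hi => min_eq_left (h i hi).le]
    exact min_le_left _ _

lemma exists_mem_Icc_sum_eq {ι : Type*} [Fintype ι] {g T : ℝ} {a : ι → ℝ} (hga : ∀ i, g ≤ a i)
    (hT : Fintype.card ι * g ≤ T) (hTa : T ≤ ∑ i, a i) :
    ∃ x : ι → ℝ, (∀ i, x i ∈ Set.Icc g (a i)) ∧ ∑ i, x i = T := by
  obtain ⟨t, ⟨ht0, ht1⟩, hts⟩ : ∃ t ∈ Set.Icc (0 : ℝ) 1, ∑ i, (g + t * (a i - g)) = T := by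
    have hcont : ContinuousOn (fun t : ℝ => ∑ i, (g + t * (a i - g))) (Set.Icc 0 1) := by
      fun_prop
    refine intermediate_value_Icc zero_le_one hcont ⟨?_, ?_⟩
    · simpa using hT
    · simpa using hTa
  exact ⟨fun i => g + t * (a i - g), fun i => ⟨by nlinarith [hga i], by nlinarith [hga i]⟩, hts⟩

lemma sInf_sum_comp_le {ι : Type*} [Fintype ι] {f : ℝ → ℝ} {g r T : ℝ}
    (hf : MonotoneOn f (Set.Ici g)) {a : ι → ℝ} (ha : ∀ i, a i ∈ Set.Icc g r)
    (hT : Fintype.card ι * g ≤ T) (hTa : T ≤ ∑ i, a i) :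
    sInf {s : ℝ | ∃ x : ι → ℝ, (∀ i, x i ∈ Set.Icc g r) ∧ (∑ i, x i) = T ∧
      s = ∑ i, f (x i)} ≤ ∑ i, f (a i) := by
  obtain ⟨x, hx, hxT⟩ := exists_mem_Icc_sum_eq (fun i => (ha i).1) hT hTa
  have hbdd : BddBelow {s : ℝ | ∃ x : ι → ℝ, (∀ i, x i ∈ Set.Icc g r) ∧ (∑ i, x i) = T ∧
      s = ∑ i, f (x i)} := by
    refine ⟨∑ _i : ι, f g, ?_⟩
    rintro s ⟨y, hy, -, rfl⟩
    exact sum_le_sum fun i _ => hf Set.self_mem_Ici (hy i).1 (hy i).1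
  refine (csInf_le hbdd ⟨x, fun i => ⟨(hx i).1, (hx i).2.trans (ha i).2⟩, hxT, rfl⟩).trans ?_
  exact sum_le_sum fun i _ => hf (hx i).1 (ha i).1 (hx i).2

noncomputable def geomGrid (g q r : ℝ) (N : ℕ) : Finset ℝ :=
  (range (N + 1)).image fun n => min (g * q ^ n) r

section geomGrid

variable {g q r : ℝ} {N : ℕ}

lemma card_geomGrid_le : #(geomGrid g q r N) ≤ N + 1 :=
  card_image_le.trans (card_range _).le

lemma mem_Icc_of_mem_geomGrid (hg : 0 ≤ g) (hq : 1 ≤ q) (hgr : g ≤ r) {c : ℝ}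
    (hc : c ∈ geomGrid g q r N) : c ∈ Set.Icc g r := by
  obtain ⟨n, -, rfl⟩ := mem_image.1 hc
  exact ⟨le_min (le_mul_of_one_le_right hg (one_le_pow₀ hq)) hgr, min_le_right _ _⟩

lemma exists_mem_geomGrid_le_min_le_mul (hg : 0 < g) (hq : 1 < q) (hr : 0 ≤ r)
    (hN : r ≤ g * q ^ N) {t : ℝ} (ht : g ≤ t) :
    ∃ c ∈ geomGrid g q r N, c ≤ t ∧ min t r ≤ q * c := by
  obtain ⟨m, hmt, htm⟩ := exists_nat_pow_near ((one_le_div hg).2 ht) hq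
  rw [le_div_iff₀' hg] at hmt
  rw [div_lt_iff₀' hg, pow_succ', mul_left_comm] at htm
  refine ⟨min (g * q ^ min m N) r, mem_image_of_mem _ (mem_range.2 (by omega)), ?_, ?_⟩
  · exact (min_le_left _ _).trans
      ((mul_le_mul_of_nonneg_left (pow_le_pow_right₀ hq.le (min_le_left _ _)) hg.le).trans hmt)
  · rcases le_total m N with hmN | hNm
    · rw [min_eq_left hmN, mul_min_of_nonneg _ _ (by linarith)]
      exact min_le_min htm.le (le_mul_of_one_le_left hr hq.le)
    · rw [min_eq_right hNm, min_eq_right hN]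
      exact (min_le_right _ _).trans (le_mul_of_one_le_left hr hq.le)

lemma card_piFinset_geomGrid_floor_le {ι : Type*} [Fintype ι] [DecidableEq ι] {L : ℝ} (hL : 0 ≤ L) :
    (#(Fintype.piFinset fun _ : ι => geomGrid g q r (⌊L⌋₊ + 1)) : ℝ) ≤
      (2 + L) ^ Fintype.card ι := by
  rw [Fintype.card_piFinset, prod_const, card_univ]
  push_cast
  have hcard : (#(geomGrid g q r (⌊L⌋₊ + 1)) : ℝ) ≤ ⌊L⌋₊ + 1 + 1 := by
    exact_mod_cast card_geomGrid_le
  gcongr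
  linarith [Nat.floor_le hL]

end geomGrid

lemma lt_mul_pow_floor_log_div_add_one {g r q : ℝ} (hg : 0 < g) (hr : 0 < r) (hq : 1 < q) :
    r < g * q ^ (⌊(Real.log r - Real.log g) / Real.log q⌋₊ + 1) := by
  have hlogq := Real.log_pos hq
  have hfloor :=
    (div_lt_iff₀ hlogq).1 (Nat.lt_floor_add_one ((Real.log r - Real.log g) / Real.log q))
  rw [← Real.log_lt_log_iff hr (by positivity), Real.log_mul hg.ne' (by positivity), Real.log_pow]
  push_cast
  linarith

lemma exists_geomGrid_cover {ι : Type*} [Fintype ι] [DecidableEq ι] {g r δ : ℝ} {N : ℕ} (hg : 0 < g)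
    (hr : 0 ≤ r) (hδ : δ ∈ Set.Ioo 0 1) (hN : r ≤ g * (1 + δ) ^ N) {t : ι → ℝ}
    (ht : ∀ i, g ≤ t i) (hrt : r < ∑ i, t i) :
    ∃ c ∈ Fintype.piFinset fun _ : ι => geomGrid g (1 + δ) r N,
      (1 - δ) * r ≤ ∑ i, c i ∧ ∀ i, c i ≤ t i := by
  obtain ⟨hδ0, hδ1⟩ := hδ
  choose c hcG hct hmin using fun i =>
    exists_mem_geomGrid_le_min_le_mul hg (by linarith : 1 < 1 + δ) hr hN (ht i)
  refine ⟨c, Fintype.mem_piFinset.2 hcG, ?_, hct⟩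
  have hrc : r ≤ (1 + δ) * ∑ i, c i := calc
    r = min (∑ i, t i) r := (min_eq_right hrt.le).symm
    _ ≤ ∑ i, min (t i) r := min_sum_le_sum_min _ (fun i _ => hg.le.trans (ht i)) hr
    _ ≤ ∑ i, (1 + δ) * c i := sum_le_sum fun i _ => hmin i
    _ = (1 + δ) * ∑ i, c i := (mul_sum _ _ _).symm
  have hc0 : 0 ≤ ∑ i, c i := by nlinarith
  nlinarith [mul_le_mul_of_nonneg_left hrc (by linarith : 0 ≤ 1 - δ), mul_nonneg (sq_nonneg δ) hc0]

namespace ProbabilityTheory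

variable {Ω ι : Type*} [MeasurableSpace Ω] [Fintype ι] {μ : Measure Ω}

lemma iIndepFun.measure_forall_mem_eq_prod {β : Type*} [MeasurableSpace β] {W : ι → Ω → β}
    {X : Ω → β} (hindep : iIndepFun W μ) (hident : ∀ i, IdentDistrib (W i) X μ μ)
    {S : ι → Set β} (hS : ∀ i, MeasurableSet (S i)) :
    μ {ω | ∀ i, W i ω ∈ S i} = ∏ i, μ (X ⁻¹' S i) := by
  rw [Set.ofPred_forall]
  exact (hindep.meas_iInter fun i => ⟨S i, hS i, rfl⟩).trans
    (prod_congr rfl fun i _ => (hident i).measure_mem_eq (hS i))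

lemma iIndepFun.measure_forall_le_abs_le {W : ι → Ω → ℝ} {X : Ω → ℝ}
    (hindep : iIndepFun W μ) (hident : ∀ i, IdentDistrib (W i) X μ μ) {g C : ℝ}
    {f : ℝ → ℝ} (hC : 0 ≤ C)
    (htail : ∀ u ≥ g, μ {ω | u ≤ |X ω|} ≤ ENNReal.ofReal (C * Real.exp (-f u)))
    {c : ι → ℝ} (hc : ∀ i, g ≤ c i) :
    μ {ω | ∀ i, c i ≤ |W i ω|} ≤
      ENNReal.ofReal (C ^ Fintype.card ι * Real.exp (-∑ i, f (c i))) := calc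
  μ {ω | ∀ i, c i ≤ |W i ω|} = ∏ i, μ (X ⁻¹' {x | c i ≤ |x|}) :=
    hindep.measure_forall_mem_eq_prod hident fun i =>
      measurableSet_le measurable_const measurable_abs
  _ ≤ ∏ i, ENNReal.ofReal (C * Real.exp (-f (c i))) :=
    prod_le_prod' fun i _ => htail _ (hc i)
  _ = ENNReal.ofReal (C ^ Fintype.card ι * Real.exp (-∑ i, f (c i))) := by
    rw [← ENNReal.ofReal_prod_of_nonneg fun i _ => by positivity, prod_mul_distrib, prod_const,
      card_univ, ← Real.exp_sum, sum_neg_distrib]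

lemma measure_lt_sum_abs_le_sum_geomGrid [DecidableEq ι] {W : ι → Ω → ℝ} {g r δ : ℝ} {N : ℕ}
    (hg : 0 < g) (hr : 0 ≤ r) (hδ : δ ∈ Set.Ioo 0 1) (hN : r ≤ g * (1 + δ) ^ N)
    (habs : ∀ᵐ ω ∂μ, ∀ i, g ≤ |W i ω|) :
    μ {ω | r < ∑ i, |W i ω|} ≤
      ∑ c ∈ (Fintype.piFinset fun _ : ι => geomGrid g (1 + δ) r N).filter
        (fun c => (1 - δ) * r ≤ ∑ i, c i), μ {ω | ∀ i, c i ≤ |W i ω|} := by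
  refine (measure_mono_ae ?_).trans (measure_biUnion_finset_le _ _)
  filter_upwards [habs] with ω hω hrω
  obtain ⟨c, hcG, hcS, hc⟩ := exists_geomGrid_cover hg hr hδ hN hω hrω
  exact Set.mem_biUnion (mem_filter.2 ⟨hcG, hcS⟩) hc

end ProbabilityTheory

theorem sum_big_jump_tail_estimate_general
    {Ω : Type*} [MeasureSpace Ω] [IsProbabilityMeasure (ℙ : Measure Ω)]
    (k : ℕ) (hk : 0 < k) (W : Fin k → Ω → ℝ)
    (hindep : iIndepFun W ℙ)
    (hident : ∀ i, IdentDistrib (W i) (W ⟨0, hk⟩) ℙ ℙ)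
    (g : ℝ) (hg : 0 < g) (f : ℝ → ℝ) (hf : MonotoneOn f (Set.Ici g))
    (β : ℝ) (hβ : β = 2 * Real.exp (-f g))
    (habs : ∀ᵐ ω ∂(ℙ : Measure Ω), g ≤ |W ⟨0, hk⟩ ω|)
    (htail : ∀ u ≥ g, (ℙ {ω | u ≤ |W ⟨0, hk⟩ ω|}) ≤ ENNReal.ofReal (2 / β * Real.exp (-f u)))
    (r δ : ℝ) (hδ : δ ∈ Set.Ioo (0 : ℝ) 1)
    (hδr : (k : ℝ) * g < (1 - δ) * r) :
    ℙ {ω | r < ∑ i, |W i ω|} ≤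
      ENNReal.ofReal ((2 / β) ^ k *
        (2 + (Real.log r - Real.log g) / Real.log (1 + δ)) ^ k *
        Real.exp (-sInf {s : ℝ | ∃ x : Fin k → ℝ, (∀ i, x i ∈ Set.Icc g r) ∧
          (∑ i, x i) = (1 - δ) * r ∧ s = ∑ i, f (x i)})) := by
  obtain ⟨hδ0, hδ1⟩ := hδ
  have hC : 0 ≤ 2 / β := by rw [hβ]; positivity
  have hgr : g ≤ r := by
    have : g ≤ k * g := le_mul_of_one_le_left hg.le (by exact_mod_cast hk)
    nlinarith
  set L := (Real.log r - Real.log g) / Real.log (1 + δ)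
  have hL : 0 ≤ L := div_nonneg (sub_nonneg.2 (Real.log_le_log hg hgr))
    (Real.log_pos (by linarith)).le
  set G := Fintype.piFinset fun _ : Fin k => geomGrid g (1 + δ) r (⌊L⌋₊ + 1)
  set S := G.filter fun c => (1 - δ) * r ≤ ∑ i, c i
  set Z := {s : ℝ | ∃ x : Fin k → ℝ, (∀ i, x i ∈ Set.Icc g r) ∧
    (∑ i, x i) = (1 - δ) * r ∧ s = ∑ i, f (x i)}
  have hterm : ∀ c ∈ S, ℙ {ω | ∀ i, c i ≤ |W i ω|} ≤
      ENNReal.ofReal ((2 / β) ^ k * Real.exp (-sInf Z)) := by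
    intro c hc
    obtain ⟨hcG, hcS⟩ := mem_filter.1 hc
    have hcI i := mem_Icc_of_mem_geomGrid hg.le (by linarith) hgr (Fintype.mem_piFinset.1 hcG i)
    refine (hindep.measure_forall_le_abs_le hident hC htail fun i => (hcI i).1).trans ?_
    rw [Fintype.card_fin]
    gcongr
    exact sInf_sum_comp_le hf hcI (by simpa using hδr.le) hcS
  have hcard : (#S : ℝ) ≤ (2 + L) ^ k := by
    simpa using (Nat.cast_le.2 (card_filter_le G _)).trans (card_piFinset_geomGrid_floor_le hL)
  calc ℙ {ω | r < ∑ i, |W i ω|}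
      ≤ ∑ c ∈ S, ℙ {ω | ∀ i, c i ≤ |W i ω|} :=
        measure_lt_sum_abs_le_sum_geomGrid hg (hg.le.trans hgr) ⟨hδ0, hδ1⟩
          (lt_mul_pow_floor_log_div_add_one hg (hg.trans_le hgr) (by linarith)).le
          (ae_all_iff.2 fun i => (hident i).symm.ae_snd
            (measurableSet_le measurable_const measurable_abs) habs)
    _ ≤ #S • ENNReal.ofReal ((2 / β) ^ k * Real.exp (-sInf Z)) := sum_le_card_nsmul _ _ _ hterm
    _ ≤ _ := by
      rw [nsmul_eq_mul, ← ENNReal.ofReal_natCast, ← ENNReal.ofReal_mul (Nat.cast_nonneg _)]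
      refine ENNReal.ofReal_le_ofReal ?_
      calc (#S : ℝ) * ((2 / β) ^ k * Real.exp (-sInf Z))
          ≤ (2 + L) ^ k * ((2 / β) ^ k * Real.exp (-sInf Z)) := by gcongr
        _ = _ := by ring

/-- **Lemma 3.4.** Tail estimate for the sum of absolute values of `k` i.i.d. random variables
whose modulus is at least `g` a.s. and whose tail satisfies
`P(|W₁| ≥ u) ≤ (2/β) exp(-f u)` for `u ≥ g`, where `β = 2 exp(-f g)` and `f` is nondecreasing
on `[g, ∞)`. -/
theorem sum_big_jump_tail_estimate
    {Ω : Type*} [MeasureSpace Ω] [IsProbabilityMeasure (ℙ : Measure Ω)]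
    (k : ℕ) (hk : 0 < k) (W : Fin k → Ω → ℝ) (hWmeas : ∀ i, Measurable (W i))
    (hindep : iIndepFun W ℙ)
    (hident : ∀ i, IdentDistrib (W i) (W ⟨0, hk⟩) ℙ ℙ)
    (g : ℝ) (hg : 0 < g) (f : ℝ → ℝ) (hf : MonotoneOn f (Set.Ici g))
    (β : ℝ) (hβ : β = 2 * Real.exp (-f g))
    (habs : ∀ᵐ ω ∂(ℙ : Measure Ω), g ≤ |W ⟨0, hk⟩ ω|)
    (htail : ∀ u ≥ g, (ℙ {ω | u ≤ |W ⟨0, hk⟩ ω|}) ≤ ENNReal.ofReal (2 / β * Real.exp (-f u)))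
    (r δ : ℝ) (hr : (k : ℝ) * g < r) (hδ : δ ∈ Set.Ioo (0 : ℝ) 1)
    (hδr : (k : ℝ) * g < (1 - δ) * r) :
    ℙ {ω | r < ∑ i, |W i ω|} ≤
      ENNReal.ofReal ((2 / β) ^ k *
        (2 + (Real.log r - Real.log g) / Real.log (1 + δ)) ^ k *
        Real.exp (-sInf {s : ℝ | ∃ x : Fin k → ℝ, (∀ i, x i ∈ Set.Icc g r) ∧
          (∑ i, x i) = (1 - δ) * r ∧ s = ∑ i, f (x i)})) :=
  sum_big_jump_tail_estimate_general k hk W hindep hident g hg f hf β hβ habs htail r δ hδ hδr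
end

section
/- Let b : ℝ → ℝ be continuous with b(y) ≥ 0 for all y ∈ [0,1) and b(y) ≤ 0 for all y ∈ (−1,0]. Let L : [0,∞) → ℝ be càdlàg with L(0) = 0, let ε > 0 and x ∈ (−1,1), and let X : [0,∞) → ℝ be a càdlàg solution of the pathwise equation X_t = x − ∫_0^t b(X_s) ds + ε·L_t for all t ≥ 0. If T ≥ 0 is such that |X_t| < 1 for all t ∈ [0,T), then |X_T| ≤ |x| + sup_{t∈[0,T]} ε·L_t − inf_{t∈[0,T]} ε·L_t. -/
open Filter

/-- A real function on `[0,∞)` (modeled as a function on `ℝ`, constrained only on `[0,∞)`)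
is càdlàg: right-continuous at every `t ≥ 0` and with left limits at every `t > 0`. -/
def IsCadlag (f : ℝ → ℝ) : Prop :=
  (∀ t ≥ (0 : ℝ), ContinuousWithinAt f (Set.Ici t) t) ∧
  (∀ t > (0 : ℝ), ∃ c : ℝ, Tendsto f (nhdsWithin t (Set.Iio t)) (nhds c))

/-!
Let `τ ≤ T` be the last time at which `X` is negative (`τ = 0` if there is none). On `(τ, T)` the
drift `b (X s)` is nonnegative, so `X - ε L`, which is continuous although `X` may jump, can only
decrease there. At `τ` it is at most `|x| - inf ε L`, by continuity, since it is so at the times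
accumulating at `τ` where `X < 0` (or at `0`). Hence `X T ≤ |x| + sup ε L - inf ε L`; the lower
bound is the same argument applied to `-X`.
-/

open Set Bornology MeasureTheory Topology

lemma aestronglyMeasurable_restrict_Ici_of_continuousWithinAt {β : Type*} [TopologicalSpace β]
    [TopologicalSpace.PseudoMetrizableSpace β] {f : ℝ → β} {a : ℝ}
    (hf : ∀ t ≥ a, ContinuousWithinAt f (Ici t) t) :
    AEStronglyMeasurable f (volume.restrict (Ici a)) := by
  set u : ℕ → ℝ → ℝ := fun n t => ⌈t * (n + 1)⌉ / (n + 1)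
  have hu_meas : ∀ n, StronglyMeasurable fun t => f (u n t) := fun n =>
    (StronglyMeasurable.of_discrete (f := fun k : ℤ => f (k / (n + 1)))).comp_measurable
      (Int.measurable_ceil.comp (measurable_id.mul_const _))
  have hu_ge : ∀ n t, t ≤ u n t := fun n t =>
    (le_div_iff₀ (by positivity)).2 (Int.le_ceil _)
  have hu_le : ∀ n t, u n t ≤ t + 1 / (n + 1) := fun n t => by
    rw [div_le_iff₀ (by positivity), add_mul, one_div_mul_cancel (by positivity)]
    exact (Int.ceil_lt_add_one _).le
  have hu_tendsto : ∀ t, Tendsto (fun n => u n t) atTop (𝓝[≥] t) := fun t =>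
    tendsto_nhdsWithin_of_tendsto_nhds_of_eventually_within _
      (tendsto_of_tendsto_of_tendsto_of_le_of_le tendsto_const_nhds
        (by simpa using tendsto_const_nhds.add (tendsto_one_div_add_atTop_nhds_zero_nat (𝕜 := ℝ)))
        (hu_ge · t) (hu_le · t))
      (Eventually.of_forall (hu_ge · t))
  refine aestronglyMeasurable_of_tendsto_ae atTop (fun n => (hu_meas n).aestronglyMeasurable) ?_
  exact (ae_restrict_iff' measurableSet_Ici).2 <| Eventually.of_forall fun t ht =>
    (hf t ht).tendsto.comp (hu_tendsto t)

lemma integrableOn_comp_of_continuousWithinAt {b X : ℝ → ℝ} {K : Set ℝ} {T : ℝ}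
    (hb : Continuous b) (hK : IsCompact K) (hX : ∀ t ≥ 0, ContinuousWithinAt X (Ici t) t)
    (hXK : ∀ t ∈ Ico 0 T, X t ∈ K) :
    IntegrableOn (fun s => b (X s)) (Icc 0 T) := by
  obtain ⟨M, hM⟩ := hK.exists_bound_of_continuousOn hb.continuousOn
  rw [integrableOn_Icc_iff_integrableOn_Ico]
  refine Integrable.of_bound (hb.comp_aestronglyMeasurable
    ((aestronglyMeasurable_restrict_Ici_of_continuousWithinAt hX).mono_set Ico_subset_Ici_self))
    M ((ae_restrict_iff' measurableSet_Ico).2 (Eventually.of_forall fun t ht => hM _ (hXK t ht)))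

lemma le_abs_add_sSup_sub_sInf {X Y : ℝ → ℝ} {T : ℝ} (hT : 0 ≤ T)
    (hcont : ContinuousOn (fun t => X t - Y t) (Icc 0 T))
    (hdown : ∀ τ ∈ Icc 0 T, (∀ s ∈ Ioo τ T, 0 ≤ X s) → X T - Y T ≤ X τ - Y τ)
    (hYa : BddAbove (Y '' Icc 0 T)) (hYb : BddBelow (Y '' Icc 0 T)) :
    X T ≤ |X 0| + sSup (Y '' Icc 0 T) - sInf (Y '' Icc 0 T) := by
  set S := insert 0 {s ∈ Ico 0 T | X s < 0}
  have hS : S ⊆ Icc 0 T := insert_subset ⟨le_rfl, hT⟩ fun s hs => Ico_subset_Icc_self hs.1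
  have hSbdd : BddAbove S := bddAbove_Icc.mono hS
  have hτ : sSup S ∈ closure S := csSup_mem_closure (insert_nonempty _ _) hSbdd
  have hτIcc : sSup S ∈ Icc 0 T := isClosed_Icc.closure_subset_iff.2 hS hτ
  have hY_ge : ∀ t ∈ Icc 0 T, sInf (Y '' Icc 0 T) ≤ Y t := fun t ht =>
    csInf_le hYb (mem_image_of_mem Y ht)
  have hbound : S ⊆ Icc 0 T ∩ (fun t => X t - Y t) ⁻¹' Iic (|X 0| - sInf (Y '' Icc 0 T)) := by
    intro s hs
    refine ⟨hS hs, ?_⟩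
    have hXs : X s ≤ |X 0| := by
      rcases hs with rfl | hs
      exacts [le_abs_self _, hs.2.le.trans (abs_nonneg _)]
    simp only [mem_preimage, mem_Iic]
    linarith [hY_ge s (hS hs)]
  have hτ_bound : X (sSup S) - Y (sSup S) ≤ |X 0| - sInf (Y '' Icc 0 T) :=
    ((hcont.preimage_isClosed_of_isClosed isClosed_Icc isClosed_Iic).closure_subset_iff.2
      hbound hτ).2
  have hnonneg : ∀ s ∈ Ioo (sSup S) T, 0 ≤ X s := fun s hs => by
    by_contra! hneg
    have hsS : s ∈ S := mem_insert_of_mem _ ⟨⟨hτIcc.1.trans hs.1.le, hs.2⟩, hneg⟩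
    exact (le_csSup hSbdd hsS).not_gt hs.1
  have hYT : Y T ≤ sSup (Y '' Icc 0 T) := le_csSup hYa (mem_image_of_mem Y ⟨hT, le_rfl⟩)
  linarith [hdown _ hτIcc hnonneg, hτ_bound]

lemma abs_le_abs_add_sSup_sub_sInf {X Y : ℝ → ℝ} {T : ℝ} (hT : 0 ≤ T)
    (hcont : ContinuousOn (fun t => X t - Y t) (Icc 0 T))
    (hdown : ∀ τ ∈ Icc 0 T, (∀ s ∈ Ioo τ T, 0 ≤ X s) → X T - Y T ≤ X τ - Y τ)
    (hup : ∀ τ ∈ Icc 0 T, (∀ s ∈ Ioo τ T, X s ≤ 0) → X τ - Y τ ≤ X T - Y T)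
    (hY : IsBounded (Y '' Icc 0 T)) :
    |X T| ≤ |X 0| + sSup (Y '' Icc 0 T) - sInf (Y '' Icc 0 T) := by
  obtain ⟨hYb, hYa⟩ := isBounded_iff_bddBelow_bddAbove.1 hY
  have hne : (Y '' Icc 0 T).Nonempty := (nonempty_Icc.2 hT).image Y
  have himage : (fun t => -Y t) '' Icc 0 T = -(Y '' Icc 0 T) := by
    rw [← image_neg_eq_neg, image_image]
  have hupper := le_abs_add_sSup_sub_sInf hT hcont hdown hYa hYb
  have hlower := le_abs_add_sSup_sub_sInf (X := fun t => -X t) (Y := fun t => -Y t) hT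
    (hcont.neg.congr fun t _ => by simp only [Pi.neg_apply]; ring)
    (fun τ hτ hneg => by
      linarith [hup τ hτ fun s hs => neg_nonneg.1 (hneg s hs)])
    (by rw [himage]; exact bddAbove_neg.2 hYb) (by rw [himage]; exact bddBelow_neg.2 hYa)
  rw [himage, csSup_neg hne hYb, csInf_neg hne hYa, abs_neg] at hlower
  exact abs_le.2 ⟨by linarith, hupper⟩

lemma abs_le_abs_add_sSup_sub_sInf_of_eq_sub_integral {X Y g : ℝ → ℝ} {x T : ℝ} (hT : 0 ≤ T)
    (hg : IntegrableOn g (Icc 0 T))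
    (hg_nonneg : ∀ s ∈ Ioo 0 T, 0 ≤ X s → 0 ≤ g s)
    (hg_nonpos : ∀ s ∈ Ioo 0 T, X s ≤ 0 → g s ≤ 0)
    (hX : ∀ t ∈ Icc 0 T, X t = x - (∫ s in (0 : ℝ)..t, g s) + Y t)
    (hXb : IsBounded (X '' Icc 0 T)) :
    |X T| ≤ |X 0| + sSup (Y '' Icc 0 T) - sInf (Y '' Icc 0 T) := by
  set F : ℝ → ℝ := fun t => ∫ s in (0 : ℝ)..t, g s
  have hF : ContinuousOn F (Icc 0 T) := by
    simpa only [uIcc_of_le hT] using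
      intervalIntegral.continuousOn_primitive_interval (a := 0) (b := T) (by rwa [uIcc_of_le hT])
  have hZ : ContinuousOn (fun t => x - F t) (Icc 0 T) := continuousOn_const.sub hF
  have hXY : ∀ t ∈ Icc 0 T, X t - Y t = x - F t := fun t ht => by
    rw [hX t ht]; ring
  have hincr : ∀ τ ∈ Icc 0 T, F T - F τ = ∫ s in τ..T, g s := fun τ hτ =>
    intervalIntegral.integral_interval_sub_left
      (hg.mono_set (uIcc_subset_Icc ⟨le_rfl, hT⟩ ⟨hT, le_rfl⟩)).intervalIntegrable
      (hg.mono_set (uIcc_subset_Icc ⟨le_rfl, hT⟩ hτ)).intervalIntegrable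
  have hint_nonneg : ∀ τ ∈ Icc 0 T, (∀ s ∈ Ioo τ T, 0 ≤ g s) → 0 ≤ ∫ s in τ..T, g s :=
    fun τ hτ h => by
      rw [intervalIntegral.integral_of_le hτ.2, integral_Ioc_eq_integral_Ioo]
      exact setIntegral_nonneg measurableSet_Ioo h
  have hint_nonpos : ∀ τ ∈ Icc 0 T, (∀ s ∈ Ioo τ T, g s ≤ 0) → ∫ s in τ..T, g s ≤ 0 :=
    fun τ hτ h => by
      rw [intervalIntegral.integral_of_le hτ.2, integral_Ioc_eq_integral_Ioo]
      exact setIntegral_nonpos measurableSet_Ioo h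
  have hsub : ∀ {τ s}, τ ∈ Icc 0 T → s ∈ Ioo τ T → s ∈ Ioo 0 T := fun hτ hs =>
    ⟨hτ.1.trans_lt hs.1, hs.2⟩
  have hTmem : T ∈ Icc 0 T := ⟨hT, le_rfl⟩
  refine abs_le_abs_add_sSup_sub_sInf hT (hZ.congr hXY) (fun τ hτ hpos => ?_)
    (fun τ hτ hneg => ?_) ?_
  · rw [hXY T hTmem, hXY τ hτ]
    linarith [hincr τ hτ, hint_nonneg τ hτ fun s hs => hg_nonneg s (hsub hτ hs) (hpos s hs)]
  · rw [hXY T hTmem, hXY τ hτ]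
    linarith [hincr τ hτ, hint_nonpos τ hτ fun s hs => hg_nonpos s (hsub hτ hs) (hneg s hs)]
  · refine (hXb.sub ((isCompact_Icc.image_of_continuousOn hZ).isBounded)).subset ?_
    rintro _ ⟨t, ht, rfl⟩
    exact ⟨X t, mem_image_of_mem X ht, x - F t, mem_image_of_mem _ ht, by linarith [hX t ht]⟩

theorem exit_start_estimate_general (b : ℝ → ℝ) (hb : Continuous b)
    (hb1 : ∀ y ∈ Set.Ico (0 : ℝ) 1, 0 ≤ b y)
    (hb2 : ∀ y ∈ Set.Ioc (-1 : ℝ) 0, b y ≤ 0)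
    (L : ℝ → ℝ) (hL0 : L 0 = 0)
    (ε : ℝ) (x : ℝ)
    (X : ℝ → ℝ) (hX : IsCadlag X)
    (hXeq : ∀ t ≥ (0 : ℝ), X t = x - (∫ s in (0 : ℝ)..t, b (X s)) + ε * L t)
    (T : ℝ) (hT : 0 ≤ T) (hbound : ∀ t ∈ Set.Ico (0 : ℝ) T, |X t| < 1) :
    |X T| ≤ |x| + sSup ((fun t => ε * L t) '' Set.Icc 0 T)
      - sInf ((fun t => ε * L t) '' Set.Icc 0 T) := by
  have hX0 : X 0 = x := by simpa [hL0] using hXeq 0 le_rfl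
  have hXb : IsBounded (X '' Icc 0 T) := by
    rw [← Ico_insert_right hT, image_insert_eq, isBounded_insert]
    exact (Metric.isBounded_Ioo (-1) 1).subset
      (image_subset_iff.2 fun t ht => abs_lt.1 (hbound t ht))
  have hint : IntegrableOn (fun s => b (X s)) (Icc 0 T) :=
    integrableOn_comp_of_continuousWithinAt hb isCompact_Icc hX.1
      fun t ht => mem_Icc.2 (abs_le.1 (hbound t ht).le)
  rw [← hX0]
  refine abs_le_abs_add_sSup_sub_sInf_of_eq_sub_integral hT hint (fun s hs hXs => ?_)
    (fun s hs hXs => ?_) (fun t ht => hXeq t ht.1) hXb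
  · exact hb1 _ ⟨hXs, (abs_lt.1 (hbound s (Ioo_subset_Ico_self hs))).2⟩
  · exact hb2 _ ⟨(abs_lt.1 (hbound s (Ioo_subset_Ico_self hs))).1, hXs⟩

/-- **Lemma 3.2(ii), pathwise form.** If `X` solves `X t = x - ∫_0^t b (X s) ds + ε·L t`, the
drift `b` is nonnegative on `[0,1)` and nonpositive on `(-1,0]`, and `|X t| < 1` on `[0,T)`,
then `|X T| ≤ |x| + sup_{[0,T]} ε·L - inf_{[0,T]} ε·L`. -/
theorem exit_start_estimate (b : ℝ → ℝ) (hb : Continuous b)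
    (hb1 : ∀ y ∈ Set.Ico (0 : ℝ) 1, 0 ≤ b y)
    (hb2 : ∀ y ∈ Set.Ioc (-1 : ℝ) 0, b y ≤ 0)
    (L : ℝ → ℝ) (hL : IsCadlag L) (hL0 : L 0 = 0)
    (ε : ℝ) (hε : 0 < ε) (x : ℝ) (hx : x ∈ Set.Ioo (-1 : ℝ) 1)
    (X : ℝ → ℝ) (hX : IsCadlag X)
    (hXeq : ∀ t ≥ (0 : ℝ), X t = x - (∫ s in (0 : ℝ)..t, b (X s)) + ε * L t)
    (T : ℝ) (hT : 0 ≤ T) (hbound : ∀ t ∈ Set.Ico (0 : ℝ) T, |X t| < 1) :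
    |X T| ≤ |x| + sSup ((fun t => ε * L t) '' Set.Icc 0 T)
      - sInf ((fun t => ε * L t) '' Set.Icc 0 T) :=
  exit_start_estimate_general b hb hb1 hb2 L hL0 ε x X hX hXeq T hT hbound
end

section
/- Let b : ℝ → ℝ be continuous with b(y) ≥ 0 for all y ∈ [0,1) and b(y) ≤ 0 for all y ∈ (−1,0]. Let k ≥ 1 be an integer, let 0 = S_0 < S_1 < … < S_k be real numbers, let W_1, …, W_{k−1} be real numbers, let ξ : [0,∞) → ℝ be càdlàg with ξ(0) = 0, and define L_t := ξ_t + ∑_{1 ≤ i ≤ k−1, S_i ≤ t} W_i. Let ε > 0, x ∈ (−1,1), and let X : [0,∞) → ℝ be a càdlàg solution of the pathwise equation X_t = x − ∫_0^t b(X_s) ds + ε·L_t for all t ≥ 0. If T ≥ 0 is such that |X_s| < 1 for all s ∈ [0, min(S_k, T)), then sup_{t < min(S_k, T)} |X_t| ≤ |x| + ∑_{i=1}^{k−1} |ε·W_i| + 2·sup_{t∈[0,T]} |ε·ξ_t|. -/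
open Filter MeasureTheory Set Topology

/-!
Fix `t < min (S k) T` and let `r` be the supremum of the times `s ≤ t` with `X s ≤ |x|`.
On `(r, t]` we have `|x| < X < 1`, so the drift `-b (X s)` is nonpositive there, and hence
`X t ≤ X u + ∫_r^u b (X s) ds + ε (L t - L u)` for every `u ≤ r` with `X u ≤ |x|`;
letting `u → r` gives `X t ≤ |x| + sup_u |ε (L t - L u)|`. The increment of `ε L` is at most
`∑ |ε W i|` from the jumps plus `2 sup |ε ξ|` from the small-jump part. The same argument
applied to `-X` bounds `|X t|`.
-/

theorem IsCompact.bddAbove_image_of_forall_isBoundedUnder {X α : Type*} [TopologicalSpace X]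
    [SemilatticeSup α] [Nonempty α] {K : Set X} (hK : IsCompact K) {g : X → α}
    (hg : ∀ x ∈ K, IsBoundedUnder (· ≤ ·) (𝓝[K] x) g) : BddAbove (g '' K) := by
  refine hK.induction_on (p := fun U => BddAbove (g '' U)) (by simp)
    (fun _ _ hst h => h.mono (image_mono hst))
    (fun _ _ hs ht => by rw [image_union]; exact hs.union ht) fun x hx => ?_
  obtain ⟨U, hU, hxU⟩ := isBoundedUnder_iff_eventually_bddAbove.1 (hg x hx)
  exact ⟨U, hxU, hU⟩

theorem tendsto_ceil_mul_div_nhdsGE (s : ℝ) :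
    Tendsto (fun n : ℕ => (⌈s * (n + 1)⌉ : ℝ) / (n + 1)) atTop (𝓝[≥] s) := by
  have hle : ∀ n : ℕ, s ≤ (⌈s * (n + 1)⌉ : ℝ) / (n + 1) := fun n =>
    (le_div_iff₀ (by positivity)).2 (Int.le_ceil _)
  have hge : ∀ n : ℕ, (⌈s * (n + 1)⌉ : ℝ) / (n + 1) ≤ s + 1 / (n + 1) := fun n => by
    rw [div_le_iff₀ (by positivity), add_mul, one_div_mul_cancel (by positivity)]
    exact (Int.ceil_lt_add_one _).le
  refine tendsto_nhdsWithin_of_tendsto_nhds_of_eventually_within _ ?_ (Eventually.of_forall hle)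
  have hupper : Tendsto (fun n : ℕ => s + 1 / ((n : ℝ) + 1)) atTop (𝓝 s) := by
    simpa using tendsto_const_nhds.add (tendsto_one_div_add_atTop_nhds_zero_nat (𝕜 := ℝ))
  exact tendsto_of_tendsto_of_tendsto_of_le_of_le tendsto_const_nhds hupper hle hge

/-- On `A`, `f` is the pointwise limit of `s ↦ f (⌈s (n+1)⌉ / (n+1))`, each of which factors
through `ℤ`. -/
theorem aemeasurable_restrict_of_continuousWithinAt_Ici {β : Type*} [TopologicalSpace β]
    [TopologicalSpace.PseudoMetrizableSpace β] [MeasurableSpace β] [BorelSpace β]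
    {f : ℝ → β} {μ : Measure ℝ} {A : Set ℝ} (hA : MeasurableSet A)
    (hf : ∀ s ∈ A, ContinuousWithinAt f (Ici s) s) : AEMeasurable f (μ.restrict A) := by
  have hmeas : ∀ n : ℕ, Measurable fun s : ℝ => f (⌈s * (n + 1)⌉ / (n + 1)) := fun n =>
    (measurable_of_countable fun i : ℤ => f (i / (n + 1))).comp
      (Int.measurable_ceil.comp (measurable_id.mul_const _))
  refine aemeasurable_of_tendsto_metrizable_ae' (fun n => (hmeas n).aemeasurable) ?_
  filter_upwards [ae_restrict_mem hA] with s hs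
  exact (hf s hs).tendsto.comp (tendsto_ceil_mul_div_nhdsGE s)

namespace IsCadlag

variable {f : ℝ → ℝ}

theorem const_mul (hf : IsCadlag f) (c : ℝ) : IsCadlag fun s => c * f s :=
  ⟨fun t ht => (hf.1 t ht).const_mul c, fun t ht =>
    (hf.2 t ht).elim fun l hl => ⟨c * l, hl.const_mul c⟩⟩

theorem bddAbove_abs_image_Icc (hf : IsCadlag f) (T : ℝ) :
    BddAbove ((fun s => |f s|) '' Icc 0 T) := by
  refine isCompact_Icc.bddAbove_image_of_forall_isBoundedUnder fun t ht => ?_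
  have hright : IsBoundedUnder (· ≤ ·) (𝓝[≥] t) fun s => |f s| :=
    (hf.1 t ht.1).tendsto.abs.isBoundedUnder_le
  rcases ht.1.eq_or_lt with rfl | ht0
  · exact hright.mono (nhdsWithin_mono _ fun s hs => hs.1)
  obtain ⟨c, hc⟩ := hf.2 t ht0
  have hleft : IsBoundedUnder (· ≤ ·) (𝓝[<] t) fun s => |f s| := hc.abs.isBoundedUnder_le
  refine IsBoundedUnder.mono nhdsWithin_le_nhds ?_
  rw [← nhdsLT_sup_nhdsGE, IsBoundedUnder, map_sup]
  exact isBounded_sup hleft hright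

theorem integrableOn_comp_Icc (hf : IsCadlag f) {b : ℝ → ℝ} (hb : Continuous b) {K : Set ℝ}
    (hK : IsCompact K) {t : ℝ} (hfK : MapsTo f (Icc 0 t) K) :
    IntegrableOn (fun s => b (f s)) (Icc 0 t) := by
  obtain ⟨C, hC⟩ := hK.exists_bound_of_continuousOn hb.continuousOn
  have hfm : AEMeasurable f (volume.restrict (Icc 0 t)) :=
    aemeasurable_restrict_of_continuousWithinAt_Ici measurableSet_Icc fun s hs => hf.1 s hs.1
  refine (integrable_const C).mono' (hb.measurable.comp_aemeasurable hfm).aestronglyMeasurable ?_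
  filter_upwards [ae_restrict_mem measurableSet_Icc] with s hs
  exact hC _ (hfK hs)

end IsCadlag

theorem abs_sum_ite_sub_sum_ite_le_sum_abs {ι : Type*} (I : Finset ι) (S w : ι → ℝ) (s t : ℝ) :
    |∑ i ∈ I, (if S i ≤ t then w i else 0) - ∑ i ∈ I, (if S i ≤ s then w i else 0)| ≤
      ∑ i ∈ I, |w i| := by
  rw [← Finset.sum_sub_distrib]
  refine (Finset.abs_sum_le_sum_abs _ _).trans (Finset.sum_le_sum fun i _ => ?_)
  split_ifs <;> simp

theorem abs_mul_sub_mul_le_of_eq_add_sum_ite {ι : Type*} (I : Finset ι) {S W : ι → ℝ}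
    {ξ L : ℝ → ℝ} (hL : ∀ t, L t = ξ t + ∑ i ∈ I, if S i ≤ t then W i else 0) (ε : ℝ)
    {M s u : ℝ} (hs : |ε * ξ s| ≤ M) (hu : |ε * ξ u| ≤ M) :
    |ε * L s - ε * L u| ≤ ∑ i ∈ I, |ε * W i| + 2 * M := by
  simp only [hL, mul_add, Finset.mul_sum, mul_ite, mul_zero]
  rw [add_sub_add_comm]
  refine (abs_add_le _ _).trans ?_
  linarith [abs_sub (ε * ξ s) (ε * ξ u), abs_sum_ite_sub_sum_ite_le_sum_abs I S (ε * W ·) u s]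

theorem le_add_of_eq_sub_integral_add {Y g N : ℝ → ℝ} {y₀ a K t : ℝ} (ht : 0 ≤ t)
    (hg : IntegrableOn g (Icc 0 t)) (hY : ∀ s ∈ Icc 0 t, Y s = y₀ - (∫ u in 0..s, g u) + N s)
    (hY0 : Y 0 ≤ a) (hg_nonneg : ∀ s ∈ Icc 0 t, a < Y s → 0 ≤ g s)
    (hN : ∀ s ∈ Icc 0 t, N t - N s ≤ K) : Y t ≤ a + K := by
  set A := {s ∈ Icc 0 t | Y s ≤ a}
  have hA0 : (0 : ℝ) ∈ A := ⟨left_mem_Icc.2 ht, hY0⟩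
  have hAbdd : BddAbove A := ⟨t, fun s hs => hs.1.2⟩
  have hr : sSup A ∈ closure A := csSup_mem_closure ⟨0, hA0⟩ hAbdd
  have hclosure : closure A ⊆ Icc 0 t := closure_minimal (sep_subset _ _) isClosed_Icc
  obtain ⟨hr0, hrt⟩ := hclosure hr
  have hG : ContinuousOn (fun s => ∫ u in 0..s, g u) (Icc 0 t) := by
    simpa only [uIcc_of_le ht] using
      intervalIntegral.continuousOn_primitive_interval (a := 0) (b := t) (μ := volume)
        (by rwa [uIcc_of_le ht])
  have hA : ∀ u ∈ A, Y t - a - K ≤ (∫ v in 0..u, g v) - ∫ v in 0..t, g v := by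
    rintro u ⟨hu, hYu⟩
    linarith [hY t (right_mem_Icc.2 ht), hY u hu, hN u hu]
  have hGr : Y t - a - K ≤ (∫ v in 0..sSup A, g v) - ∫ v in 0..t, g v :=
    le_on_closure hA continuousOn_const ((hG.sub continuousOn_const).mono hclosure) hr
  have hint : ∀ u ∈ Icc 0 t, IntervalIntegrable g volume 0 u := fun u hu =>
    (hg.mono_set (by rw [uIcc_of_le hu.1]; exact Icc_subset_Icc_right hu.2)).intervalIntegrable
  -- past `sSup A` the solution stays above `a`, where the drift has the good sign
  have hGt : (∫ v in 0..sSup A, g v) ≤ ∫ v in 0..t, g v := by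
    rw [← sub_nonneg, intervalIntegral.integral_interval_sub_left (hint t (right_mem_Icc.2 ht))
      (hint _ ⟨hr0, hrt⟩), intervalIntegral.integral_of_le hrt]
    refine setIntegral_nonneg measurableSet_Ioc fun s hs => ?_
    have hs' : s ∈ Icc 0 t := ⟨hr0.trans hs.1.le, hs.2⟩
    exact hg_nonneg s hs' (not_le.1 fun h => (le_csSup hAbdd ⟨hs', h⟩).not_gt hs.1)
  linarith

theorem abs_le_add_of_eq_sub_integral_add {Y g N : ℝ → ℝ} {y₀ a K t : ℝ} (ht : 0 ≤ t)
    (hg : IntegrableOn g (Icc 0 t)) (hY : ∀ s ∈ Icc 0 t, Y s = y₀ - (∫ u in 0..s, g u) + N s)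
    (hY0 : |Y 0| ≤ a) (hg_nonneg : ∀ s ∈ Icc 0 t, a < Y s → 0 ≤ g s)
    (hg_nonpos : ∀ s ∈ Icc 0 t, Y s < -a → g s ≤ 0)
    (hN : ∀ s ∈ Icc 0 t, |N t - N s| ≤ K) : |Y t| ≤ a + K := by
  rw [abs_le] at hY0 ⊢
  have hupper : Y t ≤ a + K := le_add_of_eq_sub_integral_add ht hg hY hY0.2 hg_nonneg
    fun s hs => (le_abs_self _).trans (hN s hs)
  have hlower : -Y t ≤ a + K :=
    le_add_of_eq_sub_integral_add (Y := fun s => -Y s) (g := fun s => -g s)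
      (N := fun s => -N s) (y₀ := -y₀) ht hg.neg
      (fun s hs => by rw [hY s hs, intervalIntegral.integral_neg]; ring) (by linarith)
      (fun s hs h => neg_nonneg.2 (hg_nonpos s hs (by linarith)))
      fun s hs => by linarith [neg_le_abs (N t - N s), hN s hs]
  constructor <;> linarith

theorem sup_before_kth_jump_estimate_general (b : ℝ → ℝ) (hb : Continuous b)
    (hb1 : ∀ y ∈ Set.Ico (0 : ℝ) 1, 0 ≤ b y)
    (hb2 : ∀ y ∈ Set.Ioc (-1 : ℝ) 0, b y ≤ 0)
    (k : ℕ) (S : ℕ → ℝ) (hS0 : S 0 = 0)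
    (hSmono : ∀ i < k, S i < S (i + 1))
    (W : ℕ → ℝ) (ξ : ℝ → ℝ) (hξ : IsCadlag ξ) (hξ0 : ξ 0 = 0)
    (L : ℝ → ℝ)
    (hLdef : ∀ t : ℝ, L t = ξ t + ∑ i ∈ Finset.Ico 1 k, if S i ≤ t then W i else 0)
    (ε : ℝ) (x : ℝ)
    (X : ℝ → ℝ) (hX : IsCadlag X)
    (hXeq : ∀ t ≥ (0 : ℝ), X t = x - (∫ s in (0 : ℝ)..t, b (X s)) + ε * L t)
    (T : ℝ)
    (hbound : ∀ s ∈ Set.Ico (0 : ℝ) (min (S k) T), |X s| < 1) :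
    sSup ((fun t => |X t|) '' Set.Ico 0 (min (S k) T)) ≤
      |x| + (∑ i ∈ Finset.Ico 1 k, |ε * W i|) +
        2 * sSup ((fun t => |ε * ξ t|) '' Set.Icc 0 T) := by
  set M := sSup ((fun t => |ε * ξ t|) '' Icc 0 T)
  have hM : ∀ s ∈ Icc 0 T, |ε * ξ s| ≤ M := fun s hs =>
    le_csSup ((hξ.const_mul ε).bddAbove_abs_image_Icc T) ⟨s, hs, rfl⟩
  have hM0 : 0 ≤ M := Real.sSup_nonneg (by rintro _ ⟨s, -, rfl⟩; exact abs_nonneg _)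
  have hSpos : ∀ i ∈ Finset.Ico 1 k, 0 < S i := fun i hi => by
    obtain ⟨hi1, hik⟩ := Finset.mem_Ico.1 hi
    simpa [hS0] using strictMonoOn_Iic_of_lt_succ hSmono (Nat.zero_le k) hik.le hi1
  have hX0 : X 0 = x := by
    simpa [hLdef, hξ0, Finset.sum_eq_zero fun i hi => if_neg (hSpos i hi).not_ge] using
      hXeq 0 le_rfl
  refine Real.sSup_le ?_ (by positivity)
  rintro _ ⟨t, ht, rfl⟩
  have htT : t ≤ T := ht.2.le.trans (min_le_right _ _)
  have hXt : ∀ s ∈ Icc 0 t, |X s| < 1 := fun s hs => hbound s ⟨hs.1, hs.2.trans_lt ht.2⟩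
  have hXt_le := abs_le_add_of_eq_sub_integral_add (N := fun s => ε * L s) ht.1
    (hX.integrableOn_comp_Icc hb (isCompact_Icc (a := -1) (b := 1))
      fun s hs => abs_le.1 (hXt s hs).le) (fun s hs => hXeq s hs.1) (hX0 ▸ le_rfl)
    (fun s hs h => hb1 _ ⟨(abs_nonneg x).trans h.le, (abs_lt.1 (hXt s hs)).2⟩)
    (fun s hs h => hb2 _ ⟨(abs_lt.1 (hXt s hs)).1, by linarith [abs_nonneg x]⟩)
    fun s hs => abs_mul_sub_mul_le_of_eq_add_sum_ite _ hLdef ε (hM t ⟨ht.1, htT⟩)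
      (hM s ⟨hs.1, hs.2.trans htT⟩)
  linarith

/-- **Corollary 3.1(ii), pathwise form.** If the driving noise is the sum of a small-jump part
`ξ` and a compound-Poisson-type part with jump times `S 1 < … < S (k-1)` and jump sizes `W i`,
and the solution of `X t = x - ∫_0^t b (X s) ds + ε·L t` stays in `(-1,1)` before
`min (S k) T`, then `sup_{t < min (S k) T} |X t| ≤ |x| + ∑_{i=1}^{k-1} |ε·W i|
+ 2·sup_{[0,T]} |ε·ξ|`. -/
theorem sup_before_kth_jump_estimate (b : ℝ → ℝ) (hb : Continuous b)
    (hb1 : ∀ y ∈ Set.Ico (0 : ℝ) 1, 0 ≤ b y)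
    (hb2 : ∀ y ∈ Set.Ioc (-1 : ℝ) 0, b y ≤ 0)
    (k : ℕ) (hk : 1 ≤ k) (S : ℕ → ℝ) (hS0 : S 0 = 0)
    (hSmono : ∀ i < k, S i < S (i + 1))
    (W : ℕ → ℝ) (ξ : ℝ → ℝ) (hξ : IsCadlag ξ) (hξ0 : ξ 0 = 0)
    (L : ℝ → ℝ)
    (hLdef : ∀ t : ℝ, L t = ξ t + ∑ i ∈ Finset.Ico 1 k, if S i ≤ t then W i else 0)
    (ε : ℝ) (hε : 0 < ε) (x : ℝ) (hx : x ∈ Set.Ioo (-1 : ℝ) 1)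
    (X : ℝ → ℝ) (hX : IsCadlag X)
    (hXeq : ∀ t ≥ (0 : ℝ), X t = x - (∫ s in (0 : ℝ)..t, b (X s)) + ε * L t)
    (T : ℝ) (hT : 0 ≤ T)
    (hbound : ∀ s ∈ Set.Ico (0 : ℝ) (min (S k) T), |X s| < 1) :
    sSup ((fun t => |X t|) '' Set.Ico 0 (min (S k) T)) ≤
      |x| + (∑ i ∈ Finset.Ico 1 k, |ε * W i|) +
        2 * sSup ((fun t => |ε * ξ t|) '' Set.Icc 0 T) :=
  sup_before_kth_jump_estimate_general b hb hb1 hb2 k S hS0 hSmono W ξ hξ hξ0 L hLdef ε x X hX hXeq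
    T hbound
end
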